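/- arXiv:2002.06266 — 2 statements merged into one kernel-verified Lean document; each statement's English description precedes it below -/
import Mathlib

section
/- For every K > 0 there exists a constant C > 0, depending only on n, T, K and the functions f_1,…,f_n, such that for every continuous w : [0,T] → ℝ with sup_{t∈[0,T]} |w(t)| ≤ K one has sup_{t∈[0,T]} |Φ_j[w](t)| ≤ C for all 0 ≤ j ≤ n. -/
/-!
By the recursion, `Φ_j[w]` is a sum of `2j` terms, each the product of some `Φ_{j-k}[w]` with
`w^k/k!` and with a product of the `f_i` or its derivative (the latter inside an integral over
`[0,t] ⊆ [0,T]`). The factor `w^k/k!` is bounded by `max 1 K ^ n`, and the finitely many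
products and derivatives are continuous on the compact interval `[0,T]`, hence bounded by a
common constant. So `sup |Φ_j[w]| ≤ A · max_{i<j} sup |Φ_i[w]|` with `A` independent of `w`,
and strong induction gives `sup |Φ_j[w]| ≤ A^j`.
-/

open Set
theorem IsCompact.exists_bound_of_continuousOn_of_finite {ι X : Type*} [TopologicalSpace X]
    {K : Set X} (hK : IsCompact K) {I : Set ι} (hI : I.Finite) {g : ι → X → ℝ}
    (hg : ∀ i ∈ I, ContinuousOn (g i) K) :
    ∃ C, 0 ≤ C ∧ ∀ i ∈ I, ∀ x ∈ K, |g i x| ≤ C := by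
  have hbound : ∀ i, ∃ C, i ∈ I → ∀ x ∈ K, |g i x| ≤ C := fun i => by
    by_cases hi : i ∈ I
    · obtain ⟨C, hC⟩ := hK.exists_bound_of_continuousOn (hg i hi)
      exact ⟨C, fun _ => hC⟩
    · exact ⟨0, fun h => absurd h hi⟩
  choose C hC using hbound
  obtain ⟨M, hM⟩ := (hI.image C).bddAbove
  exact ⟨max 0 M, le_max_left _ _, fun i hi x hx =>
    (hC i hi x hx).trans ((hM (mem_image_of_mem C hi)).trans (le_max_right _ _))⟩

theorem ContDiffOn.continuousOn_of_hasDerivWithinAt {E : Type*} [NormedAddCommGroup E]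
    [NormedSpace ℝ E] {f f' : ℝ → E} {s : Set ℝ} (hs : UniqueDiffOn ℝ s)
    (hf : ContDiffOn ℝ 1 f s) (hf' : ∀ t ∈ s, HasDerivWithinAt f (f' t) s t) :
    ContinuousOn f' s :=
  (hf.continuousOn_derivWithin hs le_rfl).congr fun t ht => ((hf' t ht).derivWithin (hs t ht)).symm

theorem contDiffOn_prod_Icc_sub {m : WithTop ℕ∞} {f : ℕ → ℝ → ℝ} {s : Set ℝ} {n j k : ℕ}
    (hf : ∀ i, 1 ≤ i → i ≤ n → ContDiffOn ℝ m (f i) s) (hkj : k ≤ j) (hjn : j ≤ n) :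
    ContDiffOn ℝ m (fun t => ∏ l ∈ Finset.Icc 1 k, f (j + 1 - l) t) s :=
  contDiffOn_prod fun l hl => by
    rw [Finset.mem_Icc] at hl
    exact hf _ (by omega) (by omega)

theorem abs_pow_div_factorial_le {x K : ℝ} {k n : ℕ} (hx : |x| ≤ K) (hkn : k ≤ n) :
    |x ^ k / k.factorial| ≤ max 1 K ^ n :=
  calc |x ^ k / k.factorial| ≤ |x| ^ k := by
        rw [abs_div, abs_pow, Nat.abs_cast]
        exact div_le_self (by positivity) (mod_cast k.factorial_pos)
    _ ≤ max 1 K ^ k := pow_le_pow_left₀ (abs_nonneg x) (hx.trans (le_max_right 1 K)) k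
    _ ≤ max 1 K ^ n := pow_le_pow_right₀ (le_max_left 1 K) hkn

theorem Finset.abs_sum_le_card_mul {ι : Type*} {s : Finset ι} {x : ι → ℝ} {B : ℝ}
    (h : ∀ i ∈ s, |x i| ≤ B) : |∑ i ∈ s, x i| ≤ s.card * B :=
  (s.abs_sum_le_sum_abs x).trans <| by simpa using s.sum_le_card_nsmul _ B h

theorem abs_neg_one_pow_mul_mul_mul_le {m : ℕ} {a b d c P F : ℝ} (ha : |a| ≤ c) (hb : |b| ≤ P)
    (hd : |d| ≤ F) (hc : 0 ≤ c) (hP : 0 ≤ P) : |(-1) ^ m * a * b * d| ≤ c * P * F := by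
  rw [abs_mul, abs_mul, abs_mul, abs_pow, abs_neg, abs_one, one_pow, one_mul]
  gcongr

theorem abs_neg_one_pow_mul_integral_le {m : ℕ} {T t c P D : ℝ} {a b d : ℝ → ℝ}
    (ht : t ∈ Icc 0 T) (ha : ∀ s ∈ Icc 0 T, |a s| ≤ c) (hb : ∀ s ∈ Icc 0 T, |b s| ≤ P)
    (hd : ∀ s ∈ Icc 0 T, |d s| ≤ D) (hc : 0 ≤ c) (hP : 0 ≤ P) :
    |(-1) ^ m * ∫ s in (0 : ℝ)..t, a s * b s * d s| ≤ c * P * D * T := by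
  rw [abs_mul, abs_pow, abs_neg, abs_one, one_pow, one_mul, ← Real.norm_eq_abs]
  have hbound : ∀ s ∈ uIoc 0 t, ‖a s * b s * d s‖ ≤ c * P * D := fun s hs => by
    rw [uIoc_of_le ht.1] at hs
    have hs' : s ∈ Icc 0 T := ⟨hs.1.le, hs.2.trans ht.2⟩
    rw [Real.norm_eq_abs, abs_mul, abs_mul]
    gcongr
    exacts [ha s hs', hb s hs', hd s hs']
  have hD : 0 ≤ D := (abs_nonneg _).trans (hd t ht)
  calc _ ≤ c * P * D * |t - 0| := intervalIntegral.norm_integral_le_of_norm_le_const hbound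
    _ ≤ c * P * D * T := by
      rw [sub_zero, abs_of_nonneg ht.1]
      gcongr
      exact ht.2

theorem abs_le_pow_of_abs_le_mul {α : Type*} {S : Set α} {g : ℕ → α → ℝ} {A : ℝ} {n : ℕ}
    (hA : 1 ≤ A) (h0 : ∀ t ∈ S, |g 0 t| ≤ 1)
    (hstep : ∀ j, 1 ≤ j → j ≤ n → ∀ c, 0 ≤ c → (∀ i < j, ∀ s ∈ S, |g i s| ≤ c) →
      ∀ t ∈ S, |g j t| ≤ A * c) :
    ∀ j ≤ n, ∀ t ∈ S, |g j t| ≤ A ^ j := by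
  intro j
  induction j using Nat.strong_induction_on with
  | _ j ih =>
    intro hjn t ht
    rcases Nat.eq_zero_or_pos j with rfl | hj
    · simpa using h0 t ht
    have hprev : ∀ i < j, ∀ s ∈ S, |g i s| ≤ A ^ (j - 1) := fun i hi s hs =>
      (ih i hi (by omega) s hs).trans (pow_le_pow_right₀ hA (by omega))
    calc |g j t| ≤ A * A ^ (j - 1) := hstep j hj hjn _ (by positivity) hprev t ht
      _ = A ^ j := by rw [← pow_succ', Nat.sub_add_cancel hj]

theorem abs_recursion_le {T t c P F D : ℝ} {j : ℕ} {f : ℕ → ℝ → ℝ} {fd : ℕ → ℕ → ℝ → ℝ}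
    {φ : ℕ → ℝ → ℝ} {w : ℝ → ℝ} (ht : t ∈ Icc 0 T)
    (hφ : ∀ i < j, ∀ s ∈ Icc 0 T, |φ i s| ≤ c)
    (hw : ∀ k ≤ j, ∀ s ∈ Icc 0 T, |w s ^ k / k.factorial| ≤ P)
    (hf : ∀ k, 1 ≤ k → k ≤ j → ∀ s ∈ Icc 0 T, |∏ l ∈ Finset.Icc 1 k, f (j + 1 - l) s| ≤ F)
    (hfd : ∀ k, 1 ≤ k → k ≤ j → ∀ s ∈ Icc 0 T, |fd j k s| ≤ D) (hc : 0 ≤ c) (hP : 0 ≤ P) :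
    |(∑ k ∈ Finset.Icc 1 j,
        (-1 : ℝ) ^ (k + 1) * φ (j - k) t * (w t ^ k / (Nat.factorial k : ℝ))
          * ∏ l ∈ Finset.Icc 1 k, f (j + 1 - l) t)
      + ∑ k ∈ Finset.Icc 1 j,
        (-1 : ℝ) ^ k * ∫ s in (0:ℝ)..t, φ (j - k) s * (w s ^ k / (Nat.factorial k : ℝ)) * fd j k s|
      ≤ j * (c * P * F) + j * (c * P * D * T) := by
  have hcard : ((Finset.Icc 1 j).card : ℝ) = j := by simp
  rw [← hcard]
  refine (abs_add_le _ _).trans (add_le_add ?_ ?_) <;>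
    refine Finset.abs_sum_le_card_mul fun k hk => ?_ <;>
    obtain ⟨hk1, hkj⟩ := Finset.mem_Icc.1 hk <;>
    have hφk : ∀ s ∈ Icc 0 T, |φ (j - k) s| ≤ c := hφ (j - k) (by omega)
  · exact abs_neg_one_pow_mul_mul_mul_le (hφk t ht) (hw k hkj t ht) (hf k hk1 hkj t ht) hc hP
  · exact abs_neg_one_pow_mul_integral_le ht hφk (hw k hkj) (hfd k hk1 hkj) hc hP

theorem finite_setOf_one_le_le_le (n : ℕ) :
    {p : ℕ × ℕ | 1 ≤ p.2 ∧ p.2 ≤ p.1 ∧ p.1 ≤ n}.Finite :=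
  ((finite_Iic n).prod (finite_Iic n)).subset fun _ hp => ⟨hp.2.2, hp.2.1.trans hp.2.2⟩

theorem stmt8_general
    (T : ℝ) (hT : 0 < T) (n : ℕ)
    (f : ℕ → ℝ → ℝ)
    (hf : ∀ i, 1 ≤ i → i ≤ n → ContDiffOn ℝ 1 (f i) (Set.Icc 0 T))
    (fd : ℕ → ℕ → ℝ → ℝ)
    (hfd : ∀ j k, 1 ≤ k → k ≤ j → j ≤ n → ∀ t ∈ Set.Icc (0:ℝ) T,
      HasDerivWithinAt (fun s => ∏ l ∈ Finset.Icc 1 k, f (j + 1 - l) s)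
        (fd j k t) (Set.Icc 0 T) t)
    (Φ : (ℝ → ℝ) → ℕ → ℝ → ℝ)
    (hΦ0 : ∀ u t, Φ u 0 t = 1)
    (hΦ : ∀ u : ℝ → ℝ, ContinuousOn u (Set.Icc 0 T) →
      ∀ j, 1 ≤ j → j ≤ n → ∀ t ∈ Set.Icc (0:ℝ) T,
      Φ u j t
        = (∑ k ∈ Finset.Icc 1 j,
            (-1 : ℝ) ^ (k + 1) * Φ u (j - k) t
              * (u t ^ k / (Nat.factorial k : ℝ))
              * ∏ l ∈ Finset.Icc 1 k, f (j + 1 - l) t)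
        + ∑ k ∈ Finset.Icc 1 j,
            (-1 : ℝ) ^ k *
              ∫ s in (0:ℝ)..t,
                Φ u (j - k) s * (u s ^ k / (Nat.factorial k : ℝ)) * fd j k s)
    : ∀ K : ℝ, 0 < K → ∃ C : ℝ, 0 < C ∧
      ∀ w : ℝ → ℝ, ContinuousOn w (Set.Icc 0 T) →
        (∀ t ∈ Set.Icc (0:ℝ) T, |w t| ≤ K) →
        ∀ j ≤ n, ∀ t ∈ Set.Icc (0:ℝ) T, |Φ w j t| ≤ C := by
  intro K _
  have hprod (p : ℕ × ℕ) (hp : 1 ≤ p.2 ∧ p.2 ≤ p.1 ∧ p.1 ≤ n) :=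
    contDiffOn_prod_Icc_sub hf hp.2.1 hp.2.2
  obtain ⟨F, hF0, hF⟩ := isCompact_Icc.exists_bound_of_continuousOn_of_finite
    (finite_setOf_one_le_le_le n) fun p hp => (hprod p hp).continuousOn
  obtain ⟨D, hD0, hD⟩ := isCompact_Icc.exists_bound_of_continuousOn_of_finite
    (g := fun p => fd p.1 p.2) (finite_setOf_one_le_le_le n) fun p hp =>
      (hprod p hp).continuousOn_of_hasDerivWithinAt (uniqueDiffOn_Icc hT)
        (hfd _ _ hp.1 hp.2.1 hp.2.2)
  set P := max 1 K ^ n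
  have hP : 0 ≤ P := by positivity
  set A := 1 + n * (P * F + P * D * T)
  have hA : 1 ≤ A := le_add_of_nonneg_right (by positivity)
  refine ⟨A ^ n, by positivity, fun w hw hwK j hjn t ht => ?_⟩
  refine (abs_le_pow_of_abs_le_mul hA (by simp [hΦ0]) (fun j hj hjn c hc hφ t ht => ?_)
    j hjn t ht).trans (pow_le_pow_right₀ hA hjn)
  rw [hΦ w hw j hj hjn t ht]
  refine (abs_recursion_le ht hφ
    (fun k hk s hs => abs_pow_div_factorial_le (hwK s hs) (hk.trans hjn))
    (fun k hk hkj => hF (j, k) ⟨hk, hkj, hjn⟩) (fun k hk hkj => hD (j, k) ⟨hk, hkj, hjn⟩)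
    hc hP).trans ?_
  have hjn' : (j : ℝ) ≤ n := by exact_mod_cast hjn
  calc (j : ℝ) * (c * P * F) + j * (c * P * D * T) = j * (P * F + P * D * T) * c := by ring
    _ ≤ A * c := by
      gcongr
      exact (mul_le_mul_of_nonneg_right hjn' (by positivity)).trans (le_add_of_nonneg_left zero_le_one)

/-- Uniform boundedness component of the induction hypothesis (H̄_j): for every
`K > 0` there is a constant `C > 0` (depending only on `n`, `T`, `K` and the
`f_i`) bounding `Φ_j[w]` on `[0,T]` for all `0 ≤ j ≤ n`, uniformly over all
continuous `w` bounded by `K` on `[0,T]`. -/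
theorem stmt8
    (T : ℝ) (hT : 0 < T) (n : ℕ) (hn : 1 ≤ n)
    (f : ℕ → ℝ → ℝ)
    (hf : ∀ i, 1 ≤ i → i ≤ n → ContDiffOn ℝ 1 (f i) (Set.Icc 0 T))
    (fd : ℕ → ℕ → ℝ → ℝ)
    (hfd : ∀ j k, 1 ≤ k → k ≤ j → j ≤ n → ∀ t ∈ Set.Icc (0:ℝ) T,
      HasDerivWithinAt (fun s => ∏ l ∈ Finset.Icc 1 k, f (j + 1 - l) s)
        (fd j k t) (Set.Icc 0 T) t)
    (Φ : (ℝ → ℝ) → ℕ → ℝ → ℝ)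
    (hΦ0 : ∀ u t, Φ u 0 t = 1)
    (hΦ : ∀ u : ℝ → ℝ, ContinuousOn u (Set.Icc 0 T) →
      ∀ j, 1 ≤ j → j ≤ n → ∀ t ∈ Set.Icc (0:ℝ) T,
      Φ u j t
        = (∑ k ∈ Finset.Icc 1 j,
            (-1 : ℝ) ^ (k + 1) * Φ u (j - k) t
              * (u t ^ k / (Nat.factorial k : ℝ))
              * ∏ l ∈ Finset.Icc 1 k, f (j + 1 - l) t)
        + ∑ k ∈ Finset.Icc 1 j,
            (-1 : ℝ) ^ k *
              ∫ s in (0:ℝ)..t,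
                Φ u (j - k) s * (u s ^ k / (Nat.factorial k : ℝ)) * fd j k s)
    : ∀ K : ℝ, 0 < K → ∃ C : ℝ, 0 < C ∧
      ∀ w : ℝ → ℝ, ContinuousOn w (Set.Icc 0 T) →
        (∀ t ∈ Set.Icc (0:ℝ) T, |w t| ≤ K) →
        ∀ j ≤ n, ∀ t ∈ Set.Icc (0:ℝ) T, |Φ w j t| ≤ C :=
  stmt8_general T hT n f hf fd hfd Φ hΦ0 hΦ
end

section
/- For each j ≥ 1 let v_j : [0,T] → ℝ be integrable, set w_j(t) = ∫_0^t v_j(s) ds, and let J_n^{(j)} denote the iterated ordinary integrals built from f_1,…,f_n and v_j (J_0^{(j)}(t) = 1 and J_k^{(j)}(t) = ∫_0^t f_k(s) J_{k−1}^{(j)}(s) v_j(s) ds). Suppose w : [0,T] → ℝ is continuous and sup_{t∈[0,T]} |w_j(t) − w(t)| → 0 as j → ∞. Then sup_{t∈[0,T]} |J_n^{(j)}(t) − Φ_n[w](t)| → 0 as j → ∞. -/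
/-!
The recursion defining `Φ_n[u]` makes sense for every continuous driver `u`, and its solution
depends continuously on `u` for uniform convergence on `[0, T]`: each level is assembled from the
lower ones by products, powers of `u` and primitives, and on a compact interval these operations
preserve uniform convergence to continuous limits.

The iterated integrals `J^{(m)}` solve the same recursion with the driver `w_m = ∫₀ᵗ v_m`. Indeed
`w_m` is absolutely continuous, so the product rule applies to every term of the right-hand side;
its derivative is an alternating sum that telescopes to `f_j J^{(m)}_{j-1} v_m`, and it vanishes
at `0`, exactly like `J^{(m)}_j`. Uniform convergence `w_m → w` then carries `J^{(m)}_n` to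
`Φ_n[w]`.
-/

open MeasureTheory Set Filter

def IsPrimitiveOn (F φ : ℝ → ℝ) (a b : ℝ) : Prop :=
  IntegrableOn φ (Icc a b) ∧ ∀ t ∈ Icc a b, F t = F a + ∫ s in a..t, φ s

theorem isPrimitiveOn_integral {φ : ℝ → ℝ} {a b : ℝ} (hφ : IntegrableOn φ (Icc a b)) :
    IsPrimitiveOn (fun t => ∫ s in a..t, φ s) φ a b :=
  ⟨hφ, fun t _ => by simp⟩

theorem isPrimitiveOn_const (c a b : ℝ) : IsPrimitiveOn (fun _ => c) (fun _ => 0) a b :=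
  ⟨integrableOn_zero, fun t _ => by simp⟩

namespace IsPrimitiveOn

variable {F G φ γ ψ : ℝ → ℝ} {a b : ℝ}

theorem intervalIntegrable (h : IsPrimitiveOn F φ a b) {t : ℝ} (ht : t ∈ Icc a b) :
    IntervalIntegrable φ volume a t :=
  (intervalIntegrable_iff_integrableOn_Icc_of_le ht.1).2 (h.1.mono_set (Icc_subset_Icc_right ht.2))

theorem continuousOn (h : IsPrimitiveOn F φ a b) : ContinuousOn F (Icc a b) := by
  rcases le_total a b with hab | hab
  · have hφ : IntegrableOn φ (uIcc a b) := by rw [uIcc_of_le hab]; exact h.1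
    have hprim := intervalIntegral.continuousOn_primitive_interval hφ
    rw [uIcc_of_le hab] at hprim
    exact (continuousOn_const.add hprim).congr h.2
  · exact (subsingleton_Icc_of_ge hab).continuousOn _

theorem congr (h : IsPrimitiveOn F φ a b) (hFG : EqOn F G (Icc a b)) (hφψ : EqOn φ ψ (Icc a b)) :
    IsPrimitiveOn G ψ a b := by
  refine ⟨h.1.congr_fun hφψ measurableSet_Icc, fun t ht => ?_⟩
  rw [← hFG ht, ← hFG ⟨le_rfl, ht.1.trans ht.2⟩, h.2 t ht]
  refine congrArg _ (intervalIntegral.integral_congr fun s hs => hφψ ?_)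
  rw [uIcc_of_le ht.1] at hs
  exact ⟨hs.1, hs.2.trans ht.2⟩

theorem eqOn (hF : IsPrimitiveOn F φ a b) (hG : IsPrimitiveOn G φ a b) (h : F a = G a) :
    EqOn F G (Icc a b) :=
  fun t ht => by rw [hF.2 t ht, hG.2 t ht, h]

theorem add (hF : IsPrimitiveOn F φ a b) (hG : IsPrimitiveOn G γ a b) :
    IsPrimitiveOn (fun t => F t + G t) (fun t => φ t + γ t) a b := by
  refine ⟨hF.1.add hG.1, fun t ht => ?_⟩
  beta_reduce
  rw [intervalIntegral.integral_add (hF.intervalIntegrable ht) (hG.intervalIntegrable ht),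
    hF.2 t ht, hG.2 t ht]
  ring

theorem const_mul (h : IsPrimitiveOn F φ a b) (c : ℝ) :
    IsPrimitiveOn (fun t => c * F t) (fun t => c * φ t) a b := by
  refine ⟨h.1.const_mul c, fun t ht => ?_⟩
  beta_reduce
  rw [intervalIntegral.integral_const_mul, h.2 t ht]
  ring

theorem mul (hF : IsPrimitiveOn F φ a b) (hG : IsPrimitiveOn G γ a b) :
    IsPrimitiveOn (fun t => F t * G t) (fun t => φ t * G t + F t * γ t) a b := by
  refine ⟨(hF.1.mul_continuousOn hG.continuousOn isCompact_Icc).add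
    (hG.1.continuousOn_mul hF.continuousOn isCompact_Icc), fun t ht => ?_⟩
  have hφ := hF.intervalIntegrable ht
  have hγ := hG.intervalIntegrable ht
  -- `F` and `G` agree on `[a, t]` with these absolutely continuous functions.
  set F' := fun s => F a + ∫ r in a..s, φ r
  set G' := fun s => G a + ∫ r in a..s, γ r
  have hF' : AbsolutelyContinuousOnInterval F' a t :=
    contDiffOn_const.absolutelyContinuousOnInterval.fun_add
      (hφ.absolutelyContinuousOnInterval_intervalIntegral left_mem_uIcc)
  have hG' : AbsolutelyContinuousOnInterval G' a t :=
    contDiffOn_const.absolutelyContinuousOnInterval.fun_add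
      (hγ.absolutelyContinuousOnInterval_intervalIntegral left_mem_uIcc)
  have hIcc : ∀ x ∈ uIoc a t, x ∈ Icc a b := fun x hx => by
    rw [uIoc_of_le ht.1] at hx
    exact ⟨hx.1.le, hx.2.trans ht.2⟩
  have key : ∫ x in a..t, deriv F' x * G' x + F' x * deriv G' x = F t * G t - F a * G a := by
    rw [hF'.integral_deriv_mul_eq_sub hG']
    simp only [F', G', intervalIntegral.integral_same, add_zero, ← hF.2 t ht, ← hG.2 t ht]
  show F t * G t = F a * G a + _
  rw [← sub_eq_iff_eq_add', ← key]
  refine intervalIntegral.integral_congr_ae ?_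
  filter_upwards [hφ.ae_hasDerivAt_integral, hγ.ae_hasDerivAt_integral] with x hxφ hxγ hx
  have hx' := uIoc_subset_uIcc hx
  rw [((hxφ hx' a left_mem_uIcc).const_add _).deriv, ((hxγ hx' a left_mem_uIcc).const_add _).deriv]
  simp only [F', G', ← hF.2 x (hIcc x hx), ← hG.2 x (hIcc x hx)]

theorem pow (h : IsPrimitiveOn F φ a b) (k : ℕ) :
    IsPrimitiveOn (fun t => F t ^ (k + 1)) (fun t => (k + 1) * F t ^ k * φ t) a b := by
  induction k with
  | zero => exact h.congr (fun t _ => by simp) (fun t _ => by simp)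
  | succ k ih => exact (ih.mul h).congr (fun t _ => by ring) (fun t _ => by push_cast; ring)

theorem pow_div_factorial (h : IsPrimitiveOn F φ a b) {k : ℕ} (hk : 1 ≤ k) :
    IsPrimitiveOn (fun t => F t ^ k / k.factorial)
      (fun t => F t ^ (k - 1) / (k - 1).factorial * φ t) a b := by
  obtain ⟨i, rfl⟩ := Nat.exists_eq_add_of_le' hk
  refine ((h.pow i).const_mul (i + 1).factorial⁻¹).congr (fun t _ => by ring) (fun t _ => ?_)
  simp only [Nat.add_sub_cancel, Nat.factorial_succ, Nat.cast_mul, Nat.cast_succ]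
  field_simp

end IsPrimitiveOn

theorem isPrimitiveOn_finsetSum {κ : Type*} (K : Finset κ) {F φ : κ → ℝ → ℝ} {a b : ℝ}
    (h : ∀ k ∈ K, IsPrimitiveOn (F k) (φ k) a b) :
    IsPrimitiveOn (fun t => ∑ k ∈ K, F k t) (fun t => ∑ k ∈ K, φ k t) a b := by
  classical
  induction K using Finset.induction_on with
  | empty => simpa only [Finset.sum_empty] using isPrimitiveOn_const 0 a b
  | insert k K hk ih =>
    simp only [Finset.sum_insert hk]
    exact (h k (Finset.mem_insert_self k K)).add (ih fun i hi => h i (Finset.mem_insert_of_mem hi))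

theorem ContDiffOn.continuousOn_of_hasDerivWithinAt_s9 {F φ : ℝ → ℝ} {a b : ℝ} (hab : a < b)
    (hF : ContDiffOn ℝ 1 F (Icc a b)) (hφ : ∀ t ∈ Icc a b, HasDerivWithinAt F (φ t) (Icc a b) t) :
    ContinuousOn φ (Icc a b) :=
  (hF.continuousOn_derivWithin (uniqueDiffOn_Icc hab) le_rfl).congr fun t ht =>
    ((hφ t ht).derivWithin (uniqueDiffOn_Icc hab t ht)).symm

theorem ContDiffOn.isPrimitiveOn {F φ : ℝ → ℝ} {a b : ℝ} (hab : a < b)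
    (hF : ContDiffOn ℝ 1 F (Icc a b)) (hφ : ∀ t ∈ Icc a b, HasDerivWithinAt F (φ t) (Icc a b) t) :
    IsPrimitiveOn F φ a b := by
  have hφc := hF.continuousOn_of_hasDerivWithinAt_s9 hab hφ
  refine ⟨hφc.integrableOn_Icc, fun t ht => ?_⟩
  have hsub : Icc a t ⊆ Icc a b := Icc_subset_Icc_right ht.2
  have hFTC := intervalIntegral.integral_eq_sub_of_hasDeriv_right_of_le ht.1
    (hF.continuousOn.mono hsub)
    (fun x hx => (hφ x (hsub (Ioo_subset_Icc_self hx))).mono_of_mem_nhdsWithin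
      (mem_nhdsWithin_of_mem_nhds (Icc_mem_nhds hx.1 (hx.2.trans_le ht.2))))
    ((hφc.mono hsub).intervalIntegrable_of_Icc ht.1)
  linarith

section UniformConvergence

variable {ι α β : Type*} {p : Filter ι} {s : Set α}

theorem tendstoUniformlyOn_const_seq [UniformSpace β] (f : α → β) :
    TendstoUniformlyOn (fun _ : ι => f) f p s :=
  fun _ hu => Eventually.of_forall fun _ _ _ => refl_mem_uniformity hu

theorem TendstoUniformlyOn.finsetSum [AddCommGroup β] [UniformSpace β] [IsUniformAddGroup β]
    {κ : Type*} (K : Finset κ) {F : κ → ι → α → β} {f : κ → α → β}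
    (h : ∀ k ∈ K, TendstoUniformlyOn (F k) (f k) p s) :
    TendstoUniformlyOn (fun i x => ∑ k ∈ K, F k i x) (fun x => ∑ k ∈ K, f k x) p s := by
  classical
  induction K using Finset.induction_on with
  | empty => simpa using tendstoUniformlyOn_const_seq (fun _ : α => (0 : β))
  | insert k K hk ih =>
    simp only [Finset.sum_insert hk]
    exact (h k (Finset.mem_insert_self k K)).fun_add
      (ih fun i hi => h i (Finset.mem_insert_of_mem hi))

theorem TendstoUniformlyOn.comp_of_isBounded {γ : Type*} [PseudoMetricSpace β] [ProperSpace β]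
    [UniformSpace γ] {F : ι → α → β} {f : α → β} {g : β → γ} (h : TendstoUniformlyOn F f p s)
    (hf : Bornology.IsBounded (f '' s)) (hg : Continuous g) :
    TendstoUniformlyOn (fun i x => g (F i x)) (fun x => g (f x)) p s := by
  have hK := (hf.thickening (δ := 1)).isCompact_closure
  have hfK : ∀ x ∈ s, f x ∈ closure (Metric.thickening 1 (f '' s)) := fun x hx =>
    subset_closure (Metric.self_subset_thickening one_pos _ (mem_image_of_mem f hx))
  refine ((hK.uniformContinuousOn_of_continuous hg.continuousOn).comp_tendstoUniformlyOn_eventually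
    ?_ hfK h)
  filter_upwards [Metric.tendstoUniformlyOn_iff.1 h 1 one_pos] with i hi x hx
  exact subset_closure (Metric.mem_thickening_iff.2
    ⟨f x, mem_image_of_mem f hx, (dist_comm (f x) (F i x)).symm.trans_lt (hi x hx)⟩)

theorem TendstoUniformlyOn.mul_of_continuousOn {R : Type*} [NormedRing R] [ProperSpace R]
    {F G : ι → α → R} {f g : α → R} [TopologicalSpace α] (hF : TendstoUniformlyOn F f p s)
    (hG : TendstoUniformlyOn G g p s) (hs : IsCompact s) (hf : ContinuousOn f s)
    (hg : ContinuousOn g s) :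
    TendstoUniformlyOn (fun i x => F i x * G i x) (fun x => f x * g x) p s := fun u hu =>
  ((hF.prodMk hG).comp_of_isBounded (hs.image_of_continuousOn (hf.prodMk hg)).isBounded
    continuous_mul u hu).diag_of_prod

theorem TendstoUniformlyOn.integral {E : Type*} [NormedAddCommGroup E] [NormedSpace ℝ E]
    {H : ι → ℝ → E} {h : ℝ → E} {a b : ℝ} (hH : TendstoUniformlyOn H h p (Icc a b))
    (hHi : ∀ i, IntegrableOn (H i) (Icc a b)) (hhi : IntegrableOn h (Icc a b)) :
    TendstoUniformlyOn (fun i t => ∫ s in a..t, H i s) (fun t => ∫ s in a..t, h s) p (Icc a b) := by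
  rw [Metric.tendstoUniformlyOn_iff] at hH ⊢
  intro ε hε
  rcases lt_or_ge b a with hba | hab
  · exact Eventually.of_forall fun i t ht => absurd (ht.1.trans ht.2) (not_le.2 hba)
  have hδ : 0 < ε / (b - a + 1) := div_pos hε (by linarith)
  filter_upwards [hH _ hδ] with i hi t ht
  have hsub : Icc a t ⊆ Icc a b := Icc_subset_Icc_right ht.2
  rw [dist_eq_norm, ← intervalIntegral.integral_sub
    ((intervalIntegrable_iff_integrableOn_Icc_of_le ht.1).2 (hhi.mono_set hsub))
    ((intervalIntegrable_iff_integrableOn_Icc_of_le ht.1).2 ((hHi i).mono_set hsub))]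
  calc ‖∫ s in a..t, h s - H i s‖
      ≤ ε / (b - a + 1) * |t - a| := by
        refine intervalIntegral.norm_integral_le_of_norm_le_const fun x hx => ?_
        rw [uIoc_of_le ht.1] at hx
        rw [← dist_eq_norm]
        exact (hi x ⟨hx.1.le, hx.2.trans ht.2⟩).le
    _ ≤ ε / (b - a + 1) * (b - a) := by
        rw [abs_of_nonneg (by linarith [ht.1])]
        gcongr
        exact ht.2
    _ < ε := by
        rw [div_mul_eq_mul_div, div_lt_iff₀ (by linarith)]
        linarith

end UniformConvergence

def descProd (f : ℕ → ℝ → ℝ) (j k : ℕ) (t : ℝ) : ℝ :=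
  ∏ l ∈ Finset.Icc 1 k, f (j + 1 - l) t

theorem descProd_one (f : ℕ → ℝ → ℝ) (j : ℕ) (t : ℝ) : descProd f j 1 t = f j t := by
  simp [descProd]

theorem descProd_succ (f : ℕ → ℝ → ℝ) (j k : ℕ) (t : ℝ) :
    descProd f j (k + 1) t = descProd f j k t * f (j - k) t := by
  rw [descProd, Finset.prod_Icc_succ_top (by omega), Nat.add_sub_add_right, descProd]

theorem contDiffOn_descProd {f : ℕ → ℝ → ℝ} {n j k : ℕ} {s : Set ℝ}
    (hf : ∀ i, 1 ≤ i → i ≤ n → ContDiffOn ℝ 1 (f i) s) (hkj : k ≤ j) (hjn : j ≤ n) :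
    ContDiffOn ℝ 1 (descProd f j k) s :=
  contDiffOn_prod fun l hl => by
    rw [Finset.mem_Icc] at hl
    exact hf _ (by omega) (by omega)

/-- The right-hand side of the recursion for `Φ_j[u](t)`, with `φ i` in the role of `Φ_i[u]` and
`fd j k` in that of the derivative of `descProd f j k`. -/
noncomputable def phiStep (f : ℕ → ℝ → ℝ) (fd : ℕ → ℕ → ℝ → ℝ) (φ : ℕ → ℝ → ℝ) (u : ℝ → ℝ)
    (j : ℕ) (t : ℝ) : ℝ :=
  (∑ k ∈ Finset.Icc 1 j,
      (-1 : ℝ) ^ (k + 1) * φ (j - k) t * (u t ^ k / (Nat.factorial k : ℝ)) * descProd f j k t)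
    + ∑ k ∈ Finset.Icc 1 j,
      (-1 : ℝ) ^ k * ∫ s in (0:ℝ)..t, φ (j - k) s * (u s ^ k / (Nat.factorial k : ℝ)) * fd j k s

def SolvesPhiRecursion (f : ℕ → ℝ → ℝ) (fd : ℕ → ℕ → ℝ → ℝ) (T : ℝ) (n : ℕ) (u : ℝ → ℝ)
    (φ : ℕ → ℝ → ℝ) : Prop :=
  (∀ t, φ 0 t = 1) ∧ ∀ j, 1 ≤ j → j ≤ n → ∀ t ∈ Icc 0 T, φ j t = phiStep f fd φ u j t

section Stability

variable {T : ℝ} {n : ℕ} {f : ℕ → ℝ → ℝ} {fd : ℕ → ℕ → ℝ → ℝ}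

theorem continuousOn_phiStep {φ : ℕ → ℝ → ℝ} {u : ℝ → ℝ} {j : ℕ}
    (hP : ∀ k ∈ Finset.Icc 1 j, ContinuousOn (descProd f j k) (Icc 0 T))
    (hfd : ∀ k ∈ Finset.Icc 1 j, ContinuousOn (fd j k) (Icc 0 T))
    (hφ : ∀ i < j, ContinuousOn (φ i) (Icc 0 T)) (hu : ContinuousOn u (Icc 0 T)) :
    ContinuousOn (phiStep f fd φ u j) (Icc 0 T) := by
  have hφk : ∀ k ∈ Finset.Icc 1 j, ContinuousOn (φ (j - k)) (Icc 0 T) := fun k hk =>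
    hφ _ (by rw [Finset.mem_Icc] at hk; omega)
  refine (continuousOn_finsetSum _ fun k hk => ?_).add (continuousOn_finsetSum _ fun k hk => ?_)
  · exact ((continuousOn_const.mul (hφk k hk)).mul ((hu.pow k).div_const _)).mul (hP k hk)
  · exact continuousOn_const.mul (isPrimitiveOn_integral
      (((hφk k hk).mul ((hu.pow k).div_const _)).mul (hfd k hk)).integrableOn_Icc).continuousOn

theorem tendstoUniformlyOn_phiStep {ι : Type*} {p : Filter ι} {φs : ι → ℕ → ℝ → ℝ}
    {φ : ℕ → ℝ → ℝ} {us : ι → ℝ → ℝ} {u : ℝ → ℝ} {j : ℕ}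
    (hP : ∀ k ∈ Finset.Icc 1 j, ContinuousOn (descProd f j k) (Icc 0 T))
    (hfd : ∀ k ∈ Finset.Icc 1 j, ContinuousOn (fd j k) (Icc 0 T))
    (hφs : ∀ i, ∀ l < j, ContinuousOn (φs i l) (Icc 0 T))
    (hφ : ∀ l < j, ContinuousOn (φ l) (Icc 0 T))
    (hφconv : ∀ l < j, TendstoUniformlyOn (fun i => φs i l) (φ l) p (Icc 0 T))
    (hus : ∀ i, ContinuousOn (us i) (Icc 0 T)) (hu : ContinuousOn u (Icc 0 T))
    (huconv : TendstoUniformlyOn us u p (Icc 0 T)) :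
    TendstoUniformlyOn (fun i => phiStep f fd (φs i) (us i) j) (phiStep f fd φ u j) p
      (Icc 0 T) := by
  have hK : IsCompact (Icc (0 : ℝ) T) := isCompact_Icc
  have hE : ∀ k : ℕ, TendstoUniformlyOn (fun i t => us i t ^ k / (k.factorial : ℝ))
      (fun t => u t ^ k / (k.factorial : ℝ)) p (Icc 0 T) := fun k =>
    huconv.comp_of_isBounded (hK.image_of_continuousOn hu).isBounded
      (g := fun x : ℝ => x ^ k / (k.factorial : ℝ)) (by fun_prop)
  have hEc : ∀ k : ℕ, ContinuousOn (fun t => u t ^ k / (k.factorial : ℝ)) (Icc 0 T) := fun k =>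
    (hu.pow k).div_const _
  have hlow : ∀ k ∈ Finset.Icc 1 j, j - k < j := fun k hk => by rw [Finset.mem_Icc] at hk; omega
  refine (TendstoUniformlyOn.finsetSum _ fun k hk => ?_).fun_add
    (TendstoUniformlyOn.finsetSum _ fun k hk => ?_)
  · have hc := (tendstoUniformlyOn_const_seq (fun _ : ℝ => (-1 : ℝ) ^ (k + 1))).mul_of_continuousOn
      (hφconv _ (hlow k hk)) hK continuousOn_const (hφ _ (hlow k hk))
    have hcE := hc.mul_of_continuousOn (hE k) hK (continuousOn_const.mul (hφ _ (hlow k hk))) (hEc k)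
    exact hcE.mul_of_continuousOn (tendstoUniformlyOn_const_seq _) hK
      ((continuousOn_const.mul (hφ _ (hlow k hk))).mul (hEc k)) (hP k hk)
  · have hint := ((hφconv _ (hlow k hk)).mul_of_continuousOn (hE k) hK (hφ _ (hlow k hk))
      (hEc k)).mul_of_continuousOn (tendstoUniformlyOn_const_seq (fd j k)) hK
      ((hφ _ (hlow k hk)).mul (hEc k)) (hfd k hk)
    have hlim := (((hφ _ (hlow k hk)).mul (hEc k)).mul (hfd k hk)).integrableOn_Icc (μ := volume)
    exact (tendstoUniformlyOn_const_seq (fun _ : ℝ => (-1 : ℝ) ^ k)).mul_of_continuousOn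
      (hint.integral (fun i => (((hφs i _ (hlow k hk)).mul ((hus i).pow k |>.div_const _)).mul
        (hfd k hk)).integrableOn_Icc (μ := volume)) hlim) hK continuousOn_const
      (isPrimitiveOn_integral hlim).continuousOn

theorem SolvesPhiRecursion.continuousOn {u : ℝ → ℝ} {φ : ℕ → ℝ → ℝ}
    (h : SolvesPhiRecursion f fd T n u φ)
    (hP : ∀ j ≤ n, ∀ k ∈ Finset.Icc 1 j, ContinuousOn (descProd f j k) (Icc 0 T))
    (hfd : ∀ j ≤ n, ∀ k ∈ Finset.Icc 1 j, ContinuousOn (fd j k) (Icc 0 T))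
    (hu : ContinuousOn u (Icc 0 T)) :
    ∀ j ≤ n, ContinuousOn (φ j) (Icc 0 T) := by
  intro j
  induction j using Nat.strong_induction_on with
  | _ j ih =>
    intro hjn
    rcases Nat.eq_zero_or_pos j with rfl | hj
    · exact continuousOn_const.congr fun t _ => h.1 t
    · exact (continuousOn_phiStep (hP j hjn) (hfd j hjn) (fun i hi => ih i hi (by omega)) hu).congr
        (h.2 j hj hjn)

theorem tendstoUniformlyOn_of_solvesPhiRecursion {ι : Type*} {p : Filter ι}
    {us : ι → ℝ → ℝ} {u : ℝ → ℝ} {φs : ι → ℕ → ℝ → ℝ} {φ : ℕ → ℝ → ℝ}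
    (hP : ∀ j ≤ n, ∀ k ∈ Finset.Icc 1 j, ContinuousOn (descProd f j k) (Icc 0 T))
    (hfd : ∀ j ≤ n, ∀ k ∈ Finset.Icc 1 j, ContinuousOn (fd j k) (Icc 0 T))
    (hus : ∀ i, ContinuousOn (us i) (Icc 0 T)) (hu : ContinuousOn u (Icc 0 T))
    (huconv : TendstoUniformlyOn us u p (Icc 0 T))
    (hφs : ∀ i, SolvesPhiRecursion f fd T n (us i) (φs i)) (hφ : SolvesPhiRecursion f fd T n u φ) :
    ∀ j ≤ n, TendstoUniformlyOn (fun i => φs i j) (φ j) p (Icc 0 T) := by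
  intro j
  induction j using Nat.strong_induction_on with
  | _ j ih =>
    intro hjn
    rcases Nat.eq_zero_or_pos j with rfl | hj
    · exact ((tendstoUniformlyOn_const_seq fun _ => (1 : ℝ)).congr
        (Eventually.of_forall fun i t _ => ((hφs i).1 t).symm)).congr_right fun t _ => (hφ.1 t).symm
    have hφsc : ∀ i, ∀ l < j, ContinuousOn (φs i l) (Icc 0 T) := fun i l hl =>
      (hφs i).continuousOn hP hfd (hus i) l (by omega)
    have hφc : ∀ l < j, ContinuousOn (φ l) (Icc 0 T) := fun l hl =>
      hφ.continuousOn hP hfd hu l (by omega)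
    exact ((tendstoUniformlyOn_phiStep (hP j hjn) (hfd j hjn) hφsc hφc
      (fun l hl => ih l hl (by omega)) hus hu huconv).congr
        (Eventually.of_forall fun i t ht => ((hφs i).2 j hj hjn t ht).symm)).congr_right
          fun t ht => (hφ.2 j hj hjn t ht).symm

end Stability

theorem sum_Icc_neg_one_pow_mul_add_succ {R : Type*} [CommRing R] (a : ℕ → R) (j : ℕ) :
    ∑ k ∈ Finset.Icc 1 j, (-1) ^ (k + 1) * (a k + a (k + 1))
      = a 1 + (-1) ^ (j + 1) * a (j + 1) := by
  induction j with
  | zero => simp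
  | succ j ih => rw [Finset.sum_Icc_succ_top (by omega), ih]; ring

theorem sum_Icc_neg_one_pow_mul_add_ite {R : Type*} [CommRing R] (a : ℕ → R) {j : ℕ} (hj : 1 ≤ j) :
    ∑ k ∈ Finset.Icc 1 j, (-1) ^ (k + 1) * (a k + if k < j then a (k + 1) else 0) = a 1 := by
  obtain ⟨i, rfl⟩ := Nat.exists_eq_add_of_le' hj
  rw [Finset.sum_Icc_succ_top (by omega), if_neg (lt_irrefl _),
    Finset.sum_congr rfl fun k hk => by rw [if_pos (by simp at hk; omega)],
    sum_Icc_neg_one_pow_mul_add_succ]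
  ring

section IteratedIntegrals

variable {T : ℝ} {n : ℕ} {f : ℕ → ℝ → ℝ} {fd : ℕ → ℕ → ℝ → ℝ} {v : ℝ → ℝ} {J : ℕ → ℝ → ℝ}

theorem continuousOn_iteratedIntegral (hf : ∀ i, 1 ≤ i → i ≤ n → ContinuousOn (f i) (Icc 0 T))
    (hv : IntegrableOn v (Icc 0 T)) (hJ0 : ∀ t, J 0 t = 1)
    (hJ : ∀ k, 1 ≤ k → k ≤ n → ∀ t, J k t = ∫ s in (0:ℝ)..t, f k s * J (k - 1) s * v s) :
    ∀ k ≤ n, ContinuousOn (J k) (Icc 0 T) := by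
  intro k
  induction k with
  | zero => exact fun _ => continuousOn_const.congr fun t _ => hJ0 t
  | succ k ih =>
    intro hk
    exact (isPrimitiveOn_integral (IntegrableOn.continuousOn_mul
      ((hf (k + 1) (by omega) hk).mul (ih (by omega))) hv isCompact_Icc)).continuousOn.congr
      fun t _ => hJ (k + 1) (by omega) hk t

theorem isPrimitiveOn_iteratedIntegral (hf : ∀ i, 1 ≤ i → i ≤ n → ContinuousOn (f i) (Icc 0 T))
    (hv : IntegrableOn v (Icc 0 T)) (hJ0 : ∀ t, J 0 t = 1)
    (hJ : ∀ k, 1 ≤ k → k ≤ n → ∀ t, J k t = ∫ s in (0:ℝ)..t, f k s * J (k - 1) s * v s)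
    {k : ℕ} (hk : 1 ≤ k) (hkn : k ≤ n) :
    IsPrimitiveOn (J k) (fun s => f k s * J (k - 1) s * v s) 0 T :=
  (isPrimitiveOn_integral (IntegrableOn.continuousOn_mul ((hf k hk hkn).mul
    (continuousOn_iteratedIntegral hf hv hJ0 hJ (k - 1) (by omega))) hv isCompact_Icc)).congr
    (fun t _ => (hJ k hk hkn t).symm) fun _ _ => rfl

theorem isPrimitiveOn_phiStep_iteratedIntegral (hT : 0 < T)
    (hf : ∀ i, 1 ≤ i → i ≤ n → ContDiffOn ℝ 1 (f i) (Icc 0 T))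
    (hfd : ∀ j k, 1 ≤ k → k ≤ j → j ≤ n → ∀ t ∈ Icc (0:ℝ) T,
      HasDerivWithinAt (descProd f j k) (fd j k t) (Icc 0 T) t)
    (hv : IntegrableOn v (Icc 0 T)) (hJ0 : ∀ t, J 0 t = 1)
    (hJ : ∀ k, 1 ≤ k → k ≤ n → ∀ t, J k t = ∫ s in (0:ℝ)..t, f k s * J (k - 1) s * v s)
    {j : ℕ} (hj : 1 ≤ j) (hjn : j ≤ n) :
    IsPrimitiveOn (phiStep f fd J (fun t => ∫ s in (0:ℝ)..t, v s) j)
      (fun s => f j s * J (j - 1) s * v s) 0 T := by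
  set W : ℝ → ℝ := fun t => ∫ s in (0:ℝ)..t, v s
  have hfc : ∀ i, 1 ≤ i → i ≤ n → ContinuousOn (f i) (Icc 0 T) := fun i h1 h2 =>
    (hf i h1 h2).continuousOn
  have hW : IsPrimitiveOn W v 0 T := isPrimitiveOn_integral hv
  have hJ' : ∀ k ∈ Finset.Icc 1 j, IsPrimitiveOn (J (j - k))
      (fun s => if k < j then f (j - k) s * J (j - k - 1) s * v s else 0) 0 T := by
    intro k hk
    rw [Finset.mem_Icc] at hk
    split_ifs with hkj
    · exact isPrimitiveOn_iteratedIntegral hfc hv hJ0 hJ (by omega) (by omega)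
    · rw [show j - k = 0 by omega]
      exact (isPrimitiveOn_const 1 0 T).congr (fun t _ => (hJ0 t).symm) fun _ _ => rfl
  have hP : ∀ k ∈ Finset.Icc 1 j, IsPrimitiveOn (descProd f j k) (fd j k) 0 T := fun k hk =>
    have hk := Finset.mem_Icc.1 hk
    (contDiffOn_descProd hf hk.2 hjn).isPrimitiveOn hT (hfd j k hk.1 hk.2 hjn)
  have hterm := isPrimitiveOn_finsetSum (Finset.Icc 1 j) fun k hk =>
    (((hJ' k hk).mul (hW.pow_div_factorial (Finset.mem_Icc.1 hk).1)).mul (hP k hk)).const_mul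
      ((-1 : ℝ) ^ (k + 1))
  have hcorr := isPrimitiveOn_finsetSum (Finset.Icc 1 j) fun k hk =>
    (isPrimitiveOn_integral (φ := fun s => J (j - k) s * (W s ^ k / (k.factorial : ℝ)) * fd j k s)
      (IntegrableOn.continuousOn_mul ((continuousOn_iteratedIntegral hfc hv hJ0 hJ (j - k)
        (by omega)).mul ((hW.continuousOn.pow k).div_const _)) (hP k hk).1 isCompact_Icc)).const_mul
      ((-1 : ℝ) ^ k)
  refine (hterm.add hcorr).congr (fun t _ => by simp only [phiStep, mul_assoc]) fun s _ => ?_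
  set a : ℕ → ℝ := fun k =>
    J (j - k) s * (W s ^ (k - 1) / ((k - 1).factorial : ℝ)) * v s * descProd f j k s
  -- In the `k`-th summand, differentiating `w ^ k / k!` gives `a k` and differentiating
  -- `J (j - k)` gives `a (k + 1)`, because `descProd f j (k + 1) = descProd f j k * f (j - k)`.
  have hsummand : ∀ k ∈ Finset.Icc 1 j,
      (-1) ^ (k + 1) * ((((if k < j then f (j - k) s * J (j - k - 1) s * v s else 0) *
        (W s ^ k / (k.factorial : ℝ)) +
          J (j - k) s * (W s ^ (k - 1) / ((k - 1).factorial : ℝ) * v s)) *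
        descProd f j k s + J (j - k) s * (W s ^ k / (k.factorial : ℝ)) * fd j k s)) +
      (-1) ^ k * (J (j - k) s * (W s ^ k / (k.factorial : ℝ)) * fd j k s)
        = (-1) ^ (k + 1) * (a k + if k < j then a (k + 1) else 0) := by
    intro k hk
    split_ifs with hkj
    · simp only [a, descProd_succ, Nat.add_sub_cancel, show j - (k + 1) = j - k - 1 by omega]
      ring
    · ring
  beta_reduce
  rw [← Finset.sum_add_distrib, Finset.sum_congr rfl hsummand, sum_Icc_neg_one_pow_mul_add_ite a hj]
  simp only [a, descProd_one]
  ring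

theorem solvesPhiRecursion_iteratedIntegral (hT : 0 < T)
    (hf : ∀ i, 1 ≤ i → i ≤ n → ContDiffOn ℝ 1 (f i) (Icc 0 T))
    (hfd : ∀ j k, 1 ≤ k → k ≤ j → j ≤ n → ∀ t ∈ Icc (0:ℝ) T,
      HasDerivWithinAt (descProd f j k) (fd j k t) (Icc 0 T) t)
    (hv : IntegrableOn v (Icc 0 T)) (hJ0 : ∀ t, J 0 t = 1)
    (hJ : ∀ k, 1 ≤ k → k ≤ n → ∀ t, J k t = ∫ s in (0:ℝ)..t, f k s * J (k - 1) s * v s) :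
    SolvesPhiRecursion f fd T n (fun t => ∫ s in (0:ℝ)..t, v s) J := by
  refine ⟨hJ0, fun j hj hjn => ?_⟩
  refine (isPrimitiveOn_iteratedIntegral (fun i h1 h2 => (hf i h1 h2).continuousOn) hv hJ0 hJ hj
    hjn).eqOn (isPrimitiveOn_phiStep_iteratedIntegral hT hf hfd hv hJ0 hJ hj hjn) ?_
  rw [hJ j hj hjn 0, intervalIntegral.integral_same]
  simp only [phiStep, intervalIntegral.integral_same, mul_zero, Finset.sum_const_zero, add_zero]
  refine (Finset.sum_eq_zero fun k hk => ?_).symm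
  rw [zero_pow (by rw [Finset.mem_Icc] at hk; omega)]
  ring

end IteratedIntegrals

theorem stmt9_general
    (T : ℝ) (hT : 0 < T) (n : ℕ)
    (f : ℕ → ℝ → ℝ)
    (hf : ∀ i, 1 ≤ i → i ≤ n → ContDiffOn ℝ 1 (f i) (Set.Icc 0 T))
    (fd : ℕ → ℕ → ℝ → ℝ)
    (hfd : ∀ j k, 1 ≤ k → k ≤ j → j ≤ n → ∀ t ∈ Set.Icc (0:ℝ) T,
      HasDerivWithinAt (fun s => ∏ l ∈ Finset.Icc 1 k, f (j + 1 - l) s)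
        (fd j k t) (Set.Icc 0 T) t)
    (Φ : (ℝ → ℝ) → ℕ → ℝ → ℝ)
    (hΦ0 : ∀ u t, Φ u 0 t = 1)
    (hΦ : ∀ u : ℝ → ℝ, ContinuousOn u (Set.Icc 0 T) →
      ∀ j, 1 ≤ j → j ≤ n → ∀ t ∈ Set.Icc (0:ℝ) T,
      Φ u j t
        = (∑ k ∈ Finset.Icc 1 j,
            (-1 : ℝ) ^ (k + 1) * Φ u (j - k) t
              * (u t ^ k / (Nat.factorial k : ℝ))
              * ∏ l ∈ Finset.Icc 1 k, f (j + 1 - l) t)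
        + ∑ k ∈ Finset.Icc 1 j,
            (-1 : ℝ) ^ k *
              ∫ s in (0:ℝ)..t,
                Φ u (j - k) s * (u s ^ k / (Nat.factorial k : ℝ)) * fd j k s)
    (v : ℕ → ℝ → ℝ) (hv : ∀ j, IntegrableOn (v j) (Set.Icc 0 T))
    (J : ℕ → ℕ → ℝ → ℝ)
    (hJ0 : ∀ j t, J j 0 t = 1)
    (hJ : ∀ j k, 1 ≤ k → k ≤ n → ∀ t,
      J j k t = ∫ s in (0:ℝ)..t, f k s * J j (k - 1) s * v j s)
    (w : ℝ → ℝ) (hw : ContinuousOn w (Set.Icc 0 T))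
    (hconv : TendstoUniformlyOn (fun j t => ∫ s in (0:ℝ)..t, v j s) w atTop
      (Set.Icc 0 T)) :
    TendstoUniformlyOn (fun j => J j n) (Φ w n) atTop (Set.Icc 0 T) := by
  have hP : ∀ j ≤ n, ∀ k ∈ Finset.Icc 1 j, ContinuousOn (descProd f j k) (Icc 0 T) :=
    fun j hjn k hk => (contDiffOn_descProd hf (Finset.mem_Icc.1 hk).2 hjn).continuousOn
  have hfdc : ∀ j ≤ n, ∀ k ∈ Finset.Icc 1 j, ContinuousOn (fd j k) (Icc 0 T) := fun j hjn k hk =>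
    have hk := Finset.mem_Icc.1 hk
    (contDiffOn_descProd hf hk.2 hjn).continuousOn_of_hasDerivWithinAt_s9 hT (hfd j k hk.1 hk.2 hjn)
  have hJsol : ∀ m, SolvesPhiRecursion f fd T n (fun t => ∫ s in (0:ℝ)..t, v m s) (J m) :=
    fun m => solvesPhiRecursion_iteratedIntegral hT hf hfd (hv m) (hJ0 m) (hJ m)
  exact tendstoUniformlyOn_of_solvesPhiRecursion hP hfdc
    (fun m => (isPrimitiveOn_integral (hv m)).continuousOn) hw hconv hJsol ⟨hΦ0 w, hΦ w hw⟩ n le_rfl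

/-- Pathwise content of the uniform-convergence part of Theorems 2.1/2.2:
if the primitives `w_j(t) = ∫₀ᵗ v_j` converge uniformly on `[0,T]` to a
continuous `w`, then the iterated ordinary integrals `J_n^{(j)}` converge
uniformly on `[0,T]` to `Φ_n[w]` (the multiple Stratonovich integral when
`w` is a Brownian path). -/
theorem stmt9
    (T : ℝ) (hT : 0 < T) (n : ℕ) (hn : 1 ≤ n)
    (f : ℕ → ℝ → ℝ)
    (hf : ∀ i, 1 ≤ i → i ≤ n → ContDiffOn ℝ 1 (f i) (Set.Icc 0 T))
    (fd : ℕ → ℕ → ℝ → ℝ)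
    (hfd : ∀ j k, 1 ≤ k → k ≤ j → j ≤ n → ∀ t ∈ Set.Icc (0:ℝ) T,
      HasDerivWithinAt (fun s => ∏ l ∈ Finset.Icc 1 k, f (j + 1 - l) s)
        (fd j k t) (Set.Icc 0 T) t)
    (Φ : (ℝ → ℝ) → ℕ → ℝ → ℝ)
    (hΦ0 : ∀ u t, Φ u 0 t = 1)
    (hΦ : ∀ u : ℝ → ℝ, ContinuousOn u (Set.Icc 0 T) →
      ∀ j, 1 ≤ j → j ≤ n → ∀ t ∈ Set.Icc (0:ℝ) T,
      Φ u j t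
        = (∑ k ∈ Finset.Icc 1 j,
            (-1 : ℝ) ^ (k + 1) * Φ u (j - k) t
              * (u t ^ k / (Nat.factorial k : ℝ))
              * ∏ l ∈ Finset.Icc 1 k, f (j + 1 - l) t)
        + ∑ k ∈ Finset.Icc 1 j,
            (-1 : ℝ) ^ k *
              ∫ s in (0:ℝ)..t,
                Φ u (j - k) s * (u s ^ k / (Nat.factorial k : ℝ)) * fd j k s)
    (v : ℕ → ℝ → ℝ) (hv : ∀ j, IntegrableOn (v j) (Set.Icc 0 T))
    (J : ℕ → ℕ → ℝ → ℝ)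
    (hJ0 : ∀ j t, J j 0 t = 1)
    (hJ : ∀ j k, 1 ≤ k → k ≤ n → ∀ t,
      J j k t = ∫ s in (0:ℝ)..t, f k s * J j (k - 1) s * v j s)
    (w : ℝ → ℝ) (hw : ContinuousOn w (Set.Icc 0 T))
    (hconv : TendstoUniformlyOn (fun j t => ∫ s in (0:ℝ)..t, v j s) w atTop
      (Set.Icc 0 T)) :
    TendstoUniformlyOn (fun j => J j n) (Φ w n) atTop (Set.Icc 0 T) :=
  stmt9_general T hT n f hf fd hfd Φ hΦ0 hΦ v hv J hJ0 hJ w hw hconv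
end
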